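/- The matrix 𝒜 on I² × ℰ* (with ℰ* = ℰ ∪ {o}) defined by 𝒜((i,j,δ),(l,k,ε)) = 0 if l ≠ j, 𝒜((i,j,δ),(j,k,o)) = P(j,k), and 𝒜((i,j,δ),(j,k,ε)) = P(j,ε) μ(k) for ε ∈ ℰ, is a stochastic matrix, and η(i,j,δ) = μ(i) P(i,j) 1(δ = o) + μ(i) P(i,δ) μ(j) 1(δ ∈ ℰ) is a stationary distribution of 𝒜. -/

import Mathlib

/-!
Put `Q i (j, none) = P(i, j)` and `Q i (j, some ε) = P(i, ε) μ(j)`: the chain on `I` that is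
resurrected with law `μ` whenever it is absorbed, the mark recording how the step was made. Then
`𝒜` is the chain of consecutive marked pairs driven by `Q`, and `η = μ ⊗ Q`. A pair chain driven
by a stochastic kernel is stochastic, and `μ ⊗ Q` is stationary for it as soon as `μ` is
stationary for `Q` with the marks forgotten. That holds here because `μ` is quasi-stationary:
started from `μ`, the chain survives a step with probability `γ`, landing with law `μ`, and is
otherwise absorbed and then resurrected with law `μ`.
-/

open Finset Matrix

namespace Matrix

section PairChain

variable {I D : Type*}

def pairChain [DecidableEq I] (Q : Matrix I (I × D) ℝ) : Matrix (I × I × D) (I × I × D) ℝ :=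
  fun x y => if y.1 = x.2.1 then Q x.2.1 y.2 else 0

def pairDist (μ : I → ℝ) (Q : Matrix I (I × D) ℝ) : I × I × D → ℝ :=
  fun x => μ x.1 * Q x.1 x.2

lemma pairChain_nonneg [DecidableEq I] {Q : Matrix I (I × D) ℝ} (hQ : ∀ i y, 0 ≤ Q i y)
    (x y : I × I × D) : 0 ≤ pairChain Q x y := by
  unfold pairChain
  split_ifs
  exacts [hQ _ _, le_rfl]

variable [Fintype I] [Fintype D]

def forgetMark (Q : Matrix I (I × D) ℝ) : Matrix I I ℝ :=
  fun i j => ∑ d, Q i (j, d)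

lemma sum_pairChain [DecidableEq I] {Q : Matrix I (I × D) ℝ} (hQ : ∀ i, ∑ y, Q i y = 1)
    (x : I × I × D) : ∑ y, pairChain Q x y = 1 := by
  simp [pairChain, Fintype.sum_prod_type, hQ]

lemma sum_pairDist {μ : I → ℝ} {Q : Matrix I (I × D) ℝ} (hQ : ∀ i, ∑ y, Q i y = 1) :
    ∑ x, pairDist μ Q x = ∑ i, μ i := by
  simp [pairDist, Fintype.sum_prod_type, ← Finset.mul_sum, hQ]

lemma sum_pairDist_eq_vecMul_forgetMark (μ : I → ℝ) (Q : Matrix I (I × D) ℝ) (j : I) :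
    ∑ i, ∑ d, pairDist μ Q (i, j, d) = (μ ᵥ* forgetMark Q) j := by
  simp [pairDist, forgetMark, vecMul, dotProduct, Finset.mul_sum]

lemma sum_forgetMark (Q : Matrix I (I × D) ℝ) (i : I) :
    ∑ j, forgetMark Q i j = ∑ y, Q i y :=
  (Fintype.sum_prod_type _).symm

lemma pairDist_vecMul_pairChain [DecidableEq I] {μ : I → ℝ} {Q : Matrix I (I × D) ℝ}
    (hμ : μ ᵥ* forgetMark Q = μ) : pairDist μ Q ᵥ* pairChain Q = pairDist μ Q := by
  ext ⟨l, k, e⟩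
  calc (pairDist μ Q ᵥ* pairChain Q) (l, k, e)
      = (∑ i, ∑ d, pairDist μ Q (i, l, d)) * Q l (k, e) := by
        simp only [vecMul, dotProduct, pairChain, Fintype.sum_prod_type, mul_ite, mul_zero,
          Finset.sum_mul]
        rw [Finset.sum_comm]
        simp
    _ = pairDist μ Q (l, k, e) := by
        rw [sum_pairDist_eq_vecMul_forgetMark, hμ, pairDist]

end PairChain

section Resurrection

variable {I E : Type*}

def resurrectedKernel (P : Matrix (I ⊕ E) (I ⊕ E) ℝ) (μ : I → ℝ) : Matrix I (I × Option E) ℝ :=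
  fun i y => y.2.elim (P (.inl i) (.inl y.1)) fun ε => P (.inl i) (.inr ε) * μ y.1

variable {P : Matrix (I ⊕ E) (I ⊕ E) ℝ} {μ : I → ℝ}

lemma resurrectedKernel_nonneg (hP : ∀ a b, 0 ≤ P a b) (hμ : ∀ i, 0 ≤ μ i) (i : I)
    (y : I × Option E) : 0 ≤ resurrectedKernel P μ i y := by
  obtain ⟨k, _ | ε⟩ := y
  exacts [hP _ _, mul_nonneg (hP _ _) (hμ _)]

variable [Fintype E]

lemma forgetMark_resurrectedKernel (i j : I) :
    forgetMark (resurrectedKernel P μ) i j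
      = P (.inl i) (.inl j) + (∑ ε, P (.inl i) (.inr ε)) * μ j := by
  simp [forgetMark, resurrectedKernel, Finset.sum_mul]

variable [Fintype I]

lemma sum_resurrectedKernel (hP : ∀ i, ∑ b, P (.inl i) b = 1) (hμ : ∑ i, μ i = 1) (i : I) :
    ∑ y, resurrectedKernel P μ i y = 1 := by
  rw [← sum_forgetMark]
  simp only [forgetMark_resurrectedKernel, Finset.sum_add_distrib, ← Finset.mul_sum, hμ, mul_one]
  rw [← Fintype.sum_sum_type, hP]

lemma sum_mul_killingProb {γ : ℝ} (hP : ∀ i, ∑ b, P (.inl i) b = 1)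
    (hqsd : μ ᵥ* P.submatrix Sum.inl Sum.inl = γ • μ) :
    ∑ i, μ i * ∑ ε, P (.inl i) (.inr ε) = (1 - γ) * ∑ i, μ i := by
  have hkill : ∀ i, ∑ ε, P (.inl i) (.inr ε) = 1 - ∑ k, P (.inl i) (.inl k) := fun i => by
    rw [← hP i, Fintype.sum_sum_type]
    ring
  calc ∑ i, μ i * ∑ ε, P (.inl i) (.inr ε)
      = ∑ i, μ i - ∑ k, (μ ᵥ* P.submatrix Sum.inl Sum.inl) k := by
        simp only [hkill, mul_sub, mul_one, Finset.sum_sub_distrib, Finset.mul_sum, vecMul,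
          dotProduct, submatrix_apply]
        rw [Finset.sum_comm (γ := I)]
    _ = (1 - γ) * ∑ i, μ i := by
        simp only [hqsd, Pi.smul_apply, smul_eq_mul, ← Finset.mul_sum]
        ring

lemma vecMul_forgetMark_resurrectedKernel {γ : ℝ} (hP : ∀ i, ∑ b, P (.inl i) b = 1)
    (hμ : ∑ i, μ i = 1) (hqsd : μ ᵥ* P.submatrix Sum.inl Sum.inl = γ • μ) :
    μ ᵥ* forgetMark (resurrectedKernel P μ) = μ := by
  ext j
  calc (μ ᵥ* forgetMark (resurrectedKernel P μ)) j
      = (μ ᵥ* P.submatrix Sum.inl Sum.inl) j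
          + (∑ i, μ i * ∑ ε, P (.inl i) (.inr ε)) * μ j := by
        simp only [vecMul, dotProduct, forgetMark_resurrectedKernel, mul_add,
          Finset.sum_add_distrib, submatrix_apply, Finset.sum_mul, mul_assoc]
    _ = μ j := by
        rw [hqsd, sum_mul_killingProb hP hqsd, hμ, Pi.smul_apply, smul_eq_mul]
        ring

end Resurrection

end Matrix

theorem absorbed_kernel_stochastic_and_stationary {I E : Type*} [Fintype I] [Fintype E]
    [DecidableEq I]
    (P : Matrix (I ⊕ E) (I ⊕ E) ℝ)
    (hP0 : ∀ a b, 0 ≤ P a b)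
    (hP1 : ∀ a, ∑ b, P a b = 1)
    (μ : I → ℝ) (hμ0 : ∀ i, 0 ≤ μ i) (hμ1 : ∑ i, μ i = 1)
    (γ : ℝ)
    (hqsd : μ ᵥ* (P.submatrix Sum.inl Sum.inl) = γ • μ)
    (A : I × I × Option E → I × I × Option E → ℝ)
    (hA : ∀ (i j l k : I) (d e : Option E),
      A (i, j, d) (l, k, e)
        = if l = j then
            (match e with
              | none => P (Sum.inl j) (Sum.inl k)
              | some ε => P (Sum.inl j) (Sum.inr ε) * μ k)
          else 0)
    (η : I × I × Option E → ℝ)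
    (hη : ∀ (i j : I) (d : Option E),
      η (i, j, d)
        = match d with
          | none => μ i * P (Sum.inl i) (Sum.inl j)
          | some δ => μ i * P (Sum.inl i) (Sum.inr δ) * μ j) :
    (∀ x y, 0 ≤ A x y) ∧ (∀ x, ∑ y, A x y = 1) ∧ (∑ x, η x = 1)
      ∧ (∀ y, ∑ x, η x * A x y = η y) := by
  have hA_eq : A = pairChain (resurrectedKernel P μ) := by
    funext ⟨i, j, d⟩ ⟨l, k, e⟩
    rw [hA]
    cases e <;> rfl
  have hη_eq : η = pairDist μ (resurrectedKernel P μ) := by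
    funext ⟨i, j, d⟩
    rw [hη]
    cases d <;> simp [pairDist, resurrectedKernel, mul_assoc]
  subst hA_eq hη_eq
  have hP1_inl : ∀ i, ∑ b, P (.inl i) b = 1 := fun i => hP1 (.inl i)
  have hQ := sum_resurrectedKernel hP1_inl hμ1
  exact ⟨pairChain_nonneg (resurrectedKernel_nonneg hP0 hμ0), sum_pairChain hQ,
    (sum_pairDist hQ).trans hμ1,
    congrFun (pairDist_vecMul_pairChain (vecMul_forgetMark_resurrectedKernel hP1_inl hμ1 hqsd))⟩
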